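/- Let w be a finite word over the alphabet {0,1,…,r−1} that is a rearrangement of the word w_0 = ((k−1) mod r, (k−2) mod r, …, 1, 0). Let w' = (w_1+1, …, w_k+1, 0) and w_0' = (w_0,1 + 1, …, w_0,k + 1, 0), with addition mod r. Then inv(w) − inv(w_0) ≡ inv(w') − inv(w_0') (mod 2), where inv denotes the number of inversion pairs. -/

import Mathlib

/-- Boundary sequence of a partition (list of parts, weakly decreasing,
zero parts allowed and give leading `false`s): walk along the SE boundary
from SW corner to NE corner, `true` = east step, `false` = north step. -/
def bseq : List ℕ → List Bool
  | [] => []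
  | a :: s => bseq s ++ List.replicate (a - s.headI) true ++ [false]

/-- A partition: weakly decreasing list of positive integers. -/
def IsPartition (l : List ℕ) : Prop := l.Pairwise (· ≥ ·) ∧ ∀ x ∈ l, 0 < x

/-- The set of cells of the Young diagram (English convention, 0-indexed):
cell `(i, j)` is present iff `j < l_i`. -/
def cellSet (l : List ℕ) : Set (ℕ × ℕ) := {p | p.2 < l.getD p.1 0}

/-- Two cells are adjacent if they share an edge. -/
def CellAdj (p q : ℕ × ℕ) : Prop :=
  (p.1 = q.1 ∧ (p.2 + 1 = q.2 ∨ q.2 + 1 = p.2)) ∨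
  (p.2 = q.2 ∧ (p.1 + 1 = q.1 ∨ q.1 + 1 = p.1))

/-- A set of cells is connected (via edge-adjacency within the set). -/
def ConnSet (S : Set (ℕ × ℕ)) : Prop :=
  ∀ p ∈ S, ∀ q ∈ S, Relation.ReflTransGen (fun a b => b ∈ S ∧ CellAdj a b) p q

/-- A ribbon (border strip) of length `m`: a connected set of `m` cells
containing no 2×2 square. -/
 def IsRibbonSet (S : Set (ℕ × ℕ)) (m : ℕ) : Prop :=
  S.ncard = m ∧ ConnSet S ∧
  ∀ i j : ℕ, ¬((i, j) ∈ S ∧ (i + 1, j) ∈ S ∧ (i, j + 1) ∈ S ∧ (i + 1, j + 1) ∈ S)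

/-- `l'` is obtained from `l` by peeling a ribbon of length `m`. -/
def PeelRibbon (m : ℕ) (l l' : List ℕ) : Prop :=
  IsPartition l' ∧ cellSet l' ⊂ cellSet l ∧ IsRibbonSet (cellSet l \ cellSet l') m

/-- `l` has an empty `r`-core: it can be reduced to the empty partition by
successively peeling ribbons of length `r`. -/
def EmptyCore (r : ℕ) (l : List ℕ) : Prop :=
  Relation.ReflTransGen (fun x y => PeelRibbon r x y) l []

/-- The row-color sequence `a^(k)(λ)`: `a_i = (ℓ_i + k - i) mod r` (1-indexed),
here 0-indexed as `(l_i + k - i - 1) % r`. -/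
def rcs (r k : ℕ) (l : List ℕ) : List ℕ :=
  (List.range k).map (fun i => (l.getD i 0 + k - i - 1) % r)

/-- Inversion number of a word over a linearly ordered alphabet. -/
def invOn {α : Type*} [LinearOrder α] (w : List α) : ℕ :=
  (w.tails.map (fun t => match t with
    | [] => 0
    | a :: s => (s.filter (fun b => decide (b < a))).length)).sum

/-- `m_i` for a 0/1 (false/true) sequence: the number of `true`s among the
first `i` entries minus the number of `false`s among the remaining entries. -/
def mval (δ : List Bool) (i : ℕ) : ℤ :=
  ((δ.take i).count true : ℤ) - ((δ.drop i).count false : ℤ)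

/-- The anchor of a 0/1 sequence is at position `i` (between indices `i` and
`i+1`) iff the number of `true`s before it equals the number of `false`s after it. -/
def AnchorAt (δ : List Bool) (i : ℕ) : Prop :=
  (δ.take i).count true = (δ.drop i).count false

/-- The graph of the map `φ_r`: `IsPhi r Λ l` says that `l = φ_r (Λ 0, …, Λ (r-1))`,
i.e. the boundary sequences of the `Λ j` can be padded with leading `false`s and
trailing `true`s to a common length `t` and a common anchor position `i₀`, and the
interlaced sequence is a padding of the boundary sequence of `l`. -/
def IsPhi (r : ℕ) (Λ : ℕ → List ℕ) (l : List ℕ) : Prop :=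
  ∃ (t i₀ : ℕ) (s : ℕ → List Bool) (p q : ℕ → ℕ),
    (∀ j < r,
      s j = List.replicate (p j) false ++ bseq (Λ j) ++ List.replicate (q j) true ∧
      (s j).length = t ∧ AnchorAt (s j) i₀) ∧
    ∃ P Q : ℕ,
      List.replicate P false ++ bseq l ++ List.replicate Q true =
        (List.range (r * t)).map (fun v => (s (v % r)).getD (v / r) false)

/-- The height of a ribbon: one less than its number of rows. -/
noncomputable def htOf (S : Set (ℕ × ℕ)) : ℕ := (Prod.fst '' S).ncard - 1


/-!
An adjacent transposition of two different letters changes the number of inversions by exactly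
one, and one of two equal letters by zero. Hence for a map `f` injective on the letters,
`inv w + inv (f ∘ w)` has the same parity for all rearrangements `w` of a given word. The shift
`a ↦ (a + 1) mod r` is injective on `{0, …, r - 1}`, and appending `0` adds the number of nonzero
letters, which also depends only on the multiset of letters.
-/

section Inversions

variable {α β : Type*} [LinearOrder α] [LinearOrder β]

lemma invOn_cons (a : α) (s : List α) : invOn (a :: s) = s.countP (· < a) + invOn s := by
  simp [invOn, List.countP_eq_length_filter]

lemma invOn_append_singleton (s : List α) (c : α) :
    invOn (s ++ [c]) = invOn s + s.countP (c < ·) := by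
  induction s with
  | nil => simp [invOn]
  | cons a s ih =>
    rw [List.cons_append, invOn_cons, invOn_cons, ih, List.countP_append, List.countP_cons,
      List.countP_cons]
    simp only [List.countP_nil, decide_eq_true_eq]
    split_ifs <;> omega

lemma invOn_swap_cast_zmod_two (x y : α) (l : List α) :
    (invOn (x :: y :: l) : ZMod 2) = invOn (y :: x :: l) + if x = y then 0 else 1 := by
  simp only [invOn_cons, List.countP_cons, decide_eq_true_eq]
  have h2 : (2 : ZMod 2) = 0 := rfl
  rcases lt_trichotomy x y with hxy | rfl | hxy
  · simp [hxy, hxy.ne, not_lt.mpr hxy.le]; linear_combination -h2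
  · simp
  · simp [hxy, hxy.ne', not_lt.mpr hxy.le]; ring

theorem List.Perm.invOn_add_invOn_map_cast_zmod_two {f : α → β} {w v : List α} (h : w.Perm v)
    (hf : Set.InjOn f {x | x ∈ w}) :
    (invOn w + invOn (w.map f) : ZMod 2) = invOn v + invOn (v.map f) := by
  induction h with
  | nil => rfl
  | cons a h ih =>
    simp only [List.map_cons, invOn_cons, (h.map f).countP_eq, h.countP_eq]
    push_cast
    linear_combination ih (hf.mono fun x hx => List.mem_cons_of_mem a hx)
  | swap x y l =>
    have hfxy : f y = f x ↔ y = x := hf.eq_iff (by simp) (by simp)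
    simp only [List.map_cons, invOn_swap_cast_zmod_two y x, invOn_swap_cast_zmod_two (f y) (f x),
      hfxy]
    have h2 : (2 : ZMod 2) = 0 := rfl
    split_ifs
    · ring
    · linear_combination h2
  | trans h₁ _ ih₁ ih₂ => exact (ih₁ hf).trans (ih₂ (hf.mono fun x hx => h₁.mem_iff.mpr hx))

end Inversions

lemma Nat.injOn_add_one_mod (r : ℕ) : Set.InjOn (fun a => (a + 1) % r) (Set.Iio r) :=
  fun _ ha _ hb hab => (Nat.ModEq.add_right_cancel' 1 hab).eq_of_lt_of_lt ha hb

theorem inv_parity_stable_under_shift_append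
    (r k : ℕ) (hr : 1 ≤ r) (w : List ℕ)
    (hperm : w.Perm ((List.range k).map (fun i => (k - 1 - i) % r))) :
    ((invOn w : ℤ) - (invOn ((List.range k).map (fun i => (k - 1 - i) % r)) : ℤ)) ≡
      ((invOn (w.map (fun a => (a + 1) % r) ++ [0]) : ℤ) -
        (invOn ((((List.range k).map (fun i => (k - 1 - i) % r)).map
          (fun a => (a + 1) % r)) ++ [0]) : ℤ)) [ZMOD 2] := by
  set w₀ := (List.range k).map (fun i => (k - 1 - i) % r)
  set shift := fun a => (a + 1) % r
  have hlt : ∀ x ∈ w, x < r := fun x hx => by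
    obtain ⟨i, -, rfl⟩ := List.mem_map.mp (hperm.mem_iff.mp hx)
    exact Nat.mod_lt _ hr
  have hinv := hperm.invOn_add_invOn_map_cast_zmod_two ((Nat.injOn_add_one_mod r).mono hlt)
  have hcount := (hperm.map shift).countP_eq (0 < ·)
  refine (ZMod.intCast_eq_intCast_iff _ _ 2).mp ?_
  push_cast
  rw [invOn_append_singleton, invOn_append_singleton, hcount]
  push_cast
  have h2 : (2 : ZMod 2) = 0 := rfl
  linear_combination hinv + (invOn (w₀.map shift) - invOn (w.map shift) : ZMod 2) * h2
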